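/- arXiv:1310.1999 — 3 statements merged into one kernel-verified Lean document; each statement's English description precedes it below -/
import Mathlib

section
/- Let c ≥ 1/2, 0 < B < A, and λ > 0. Then ∫₀¹ (1-u)^{c-1/2} / (A - B u)^{c+λ+1/2} du ≤ C / (A^{c+1/2} (A-B)^λ) for a constant C depending only on c and λ. -/
/-!
With `t = 1 - u`, `a = c + 1/2` and `D = A - B` the integral becomes
`∫₀¹ t^(a-1) / (D + B t)^(a+λ) dt`. Split it at `t₀ = D / A`. Below `t₀` bound the denominator
by `D^(a+λ)`, which gives `t₀^a / (a D^(a+λ))`; above `t₀` use `D + B t ≥ A t`, which gives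
`∫ t^(-1-λ) / A^(a+λ) ≤ t₀^(-λ) / (λ A^(a+λ))`. Both bounds equal `1 / (A^a D^λ)` up to the
factors `1/a` and `1/λ`.
-/

open MeasureTheory Set

section

variable {a l D B : ℝ}

lemma rpow_div_add_mul_rpow_le_rpow_div (hal : 0 ≤ a + l) (hD : 0 < D) (hB : 0 ≤ B)
    {t : ℝ} (ht : 0 ≤ t) :
    t ^ (a - 1) / (D + B * t) ^ (a + l) ≤ t ^ (a - 1) / D ^ (a + l) := by
  gcongr
  nlinarith

lemma rpow_div_add_mul_rpow_le_rpow_neg_div (hal : 0 ≤ a + l) (hD : 0 < D) (hB : 0 ≤ B)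
    {t : ℝ} (ht : 0 < t) (ht1 : t ≤ 1) :
    t ^ (a - 1) / (D + B * t) ^ (a + l) ≤ t ^ (-1 - l) / (D + B) ^ (a + l) :=
  calc t ^ (a - 1) / (D + B * t) ^ (a + l)
      ≤ t ^ (a - 1) / ((D + B) * t) ^ (a + l) := by gcongr; nlinarith
    _ = t ^ (-1 - l) / (D + B) ^ (a + l) := by
      rw [Real.mul_rpow (by positivity) ht.le, show -1 - l = (a - 1) - (a + l) by ring,
        Real.rpow_sub ht (a - 1) (a + l)]
      ring

lemma intervalIntegrable_rpow_div_add_mul_rpow (ha : 0 < a) (hal : 0 ≤ a + l) (hD : 0 < D)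
    (hB : 0 ≤ B) {x : ℝ} (hx : 0 ≤ x) :
    IntervalIntegrable (fun t => t ^ (a - 1) / (D + B * t) ^ (a + l)) volume 0 x := by
  refine ((intervalIntegral.intervalIntegrable_rpow' (by linarith : -1 < a - 1)).div_const
    (D ^ (a + l))).mono_fun' (Measurable.aestronglyMeasurable (by fun_prop)) ?_
  rw [uIoc_of_le hx]
  filter_upwards [ae_restrict_mem measurableSet_Ioc] with t ht
  rw [Real.norm_of_nonneg (by have := ht.1; positivity)]
  exact rpow_div_add_mul_rpow_le_rpow_div hal hD hB ht.1.le

lemma integral_zero_left_rpow_div_add_mul_rpow_le (ha : 0 < a) (hal : 0 ≤ a + l) (hD : 0 < D)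
    (hB : 0 ≤ B) {x : ℝ} (hx : 0 ≤ x) :
    ∫ t in (0:ℝ)..x, t ^ (a - 1) / (D + B * t) ^ (a + l) ≤ x ^ a / (a * D ^ (a + l)) :=
  calc ∫ t in (0:ℝ)..x, t ^ (a - 1) / (D + B * t) ^ (a + l)
      ≤ ∫ t in (0:ℝ)..x, t ^ (a - 1) / D ^ (a + l) :=
        intervalIntegral.integral_mono_on_of_le_Ioo hx
          (intervalIntegrable_rpow_div_add_mul_rpow ha hal hD hB hx)
          ((intervalIntegral.intervalIntegrable_rpow' (by linarith)).div_const _)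
          fun t ht => rpow_div_add_mul_rpow_le_rpow_div hal hD hB ht.1.le
    _ = x ^ a / (a * D ^ (a + l)) := by
      rw [intervalIntegral.integral_div, integral_rpow (Or.inl (by linarith)), sub_add_cancel,
        Real.zero_rpow ha.ne', sub_zero, div_div, mul_comm]

lemma integral_one_right_rpow_div_add_mul_rpow_le (ha : 0 < a) (hl : 0 < l) (hD : 0 < D)
    (hB : 0 ≤ B) {x : ℝ} (hx : 0 < x) (hx1 : x ≤ 1) :
    ∫ t in x..1, t ^ (a - 1) / (D + B * t) ^ (a + l) ≤ x ^ (-l) / (l * (D + B) ^ (a + l)) := by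
  have hneg : ¬ (0:ℝ) ∈ uIcc x 1 := notMem_uIcc_of_lt hx one_pos
  calc ∫ t in x..1, t ^ (a - 1) / (D + B * t) ^ (a + l)
      ≤ ∫ t in x..1, t ^ (-1 - l) / (D + B) ^ (a + l) :=
        intervalIntegral.integral_mono_on_of_le_Ioo hx1
          ((intervalIntegrable_rpow_div_add_mul_rpow ha (by linarith) hD hB zero_le_one).mono_set
            (uIcc_subset_uIcc_right (mem_uIcc_of_le hx.le hx1)))
          ((intervalIntegral.intervalIntegrable_rpow (Or.inr hneg)).div_const _)
          fun t ht => rpow_div_add_mul_rpow_le_rpow_neg_div (by linarith) hD hB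
            (hx.trans ht.1) ht.2.le
    _ = (x ^ (-l) - 1) / (l * (D + B) ^ (a + l)) := by
      rw [intervalIntegral.integral_div, integral_rpow (Or.inr ⟨by linarith, hneg⟩),
        show -1 - l + 1 = -l by ring, Real.one_rpow]
      field_simp
      ring
    _ ≤ x ^ (-l) / (l * (D + B) ^ (a + l)) := by gcongr; linarith

theorem integral_rpow_div_add_mul_rpow_le (ha : 0 < a) (hl : 0 < l) (hD : 0 < D)
    (hB : 0 ≤ B) :
    ∫ t in (0:ℝ)..1, t ^ (a - 1) / (D + B * t) ^ (a + l)
      ≤ (1 / a + 1 / l) / ((D + B) ^ a * D ^ l) := by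
  have hDB : 0 < D + B := by linarith
  set x := D / (D + B) with hx_def
  have hx : 0 < x := by positivity
  have hx1 : x ≤ 1 := (div_le_one hDB).2 (by linarith)
  have hint : ∀ y, 0 ≤ y → IntervalIntegrable
      (fun t => t ^ (a - 1) / (D + B * t) ^ (a + l)) volume 0 y :=
    fun _ => intervalIntegrable_rpow_div_add_mul_rpow ha (by linarith) hD hB
  rw [← intervalIntegral.integral_add_adjacent_intervals (b := x) (hint x hx.le)
    ((hint 1 zero_le_one).mono_set (uIcc_subset_uIcc_right (mem_uIcc_of_le hx.le hx1)))]
  calc _ ≤ x ^ a / (a * D ^ (a + l)) + x ^ (-l) / (l * (D + B) ^ (a + l)) :=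
        add_le_add (integral_zero_left_rpow_div_add_mul_rpow_le ha (by linarith) hD hB hx.le)
          (integral_one_right_rpow_div_add_mul_rpow_le ha hl hD hB hx hx1)
    _ = (1 / a + 1 / l) / ((D + B) ^ a * D ^ l) := by
      rw [hx_def, Real.rpow_neg hx.le, Real.div_rpow hD.le hDB.le, Real.div_rpow hD.le hDB.le,
        Real.rpow_add hD, Real.rpow_add hDB]
      field_simp

end

lemma setIntegral_Ioo_zero_one_comp_one_sub (f : ℝ → ℝ) :
    ∫ u in Ioo (0:ℝ) 1, f (1 - u) = ∫ t in (0:ℝ)..1, f t := by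
  rw [← integral_Ioc_eq_integral_Ioo, ← intervalIntegral.integral_of_le zero_le_one,
    intervalIntegral.integral_comp_sub_left]
  norm_num

/-- Let `c ≥ 1/2`, `0 < B < A` and `λ > 0`. Then
`∫₀¹ (1-u)^(c-1/2) / (A - B u)^(c+λ+1/2) du ≤ C / (A^(c+1/2) (A-B)^λ)`
for a constant `C` depending only on `c` and `λ`. -/
theorem statement0 (c lam : ℝ) (hc : (1:ℝ)/2 ≤ c) (hlam : 0 < lam) :
    ∃ C : ℝ, 0 < C ∧ ∀ A B : ℝ, 0 < B → B < A →
      ∫ u in Set.Ioo (0:ℝ) 1, (1 - u) ^ (c - 1/2) / (A - B * u) ^ (c + lam + 1/2)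
        ≤ C / (A ^ (c + 1/2) * (A - B) ^ lam) := by
  have ha : 0 < c + 1/2 := by linarith
  refine ⟨1 / (c + 1/2) + 1 / lam, by positivity, fun A B hB hBA => ?_⟩
  calc ∫ u in Set.Ioo (0:ℝ) 1, (1 - u) ^ (c - 1/2) / (A - B * u) ^ (c + lam + 1/2)
      = ∫ t in (0:ℝ)..1, t ^ ((c + 1/2) - 1) / ((A - B) + B * t) ^ ((c + 1/2) + lam) := by
        rw [← setIntegral_Ioo_zero_one_comp_one_sub]
        congr 1 with u
        congr 1 <;> congr 1 <;> ring
    _ ≤ (1 / (c + 1/2) + 1 / lam) / ((A - B + B) ^ (c + 1/2) * (A - B) ^ lam) :=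
        integral_rpow_div_add_mul_rpow_le ha hlam (by linarith) hB.le
    _ = (1 / (c + 1/2) + 1 / lam) / (A ^ (c + 1/2) * (A - B) ^ lam) := by rw [sub_add_cancel]
end

section
/- For d ≥ 2 and r, s > 0 with r ≠ s, sup over ω ∈ S^{d-1} of ∫_{S^{d-1}} |rω - sω'|^{-d} dω' ≤ C |r-s|^{-1} (r² + s²)^{-(d-1)/2} for a constant C depending only on d. -/
/-!
Put `a = |r - s|` and `b = √(r s)`. On the unit sphere `‖r ω - s ω'‖² = a² + b² ‖ω - ω'‖²`, and
`r² + s² = a² + 2 b²`, so it suffices to bound the integral by `C / (a max(a, b)^(d-1))`.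

When `a ≥ b` the integrand is at most `a^(-d)`. When `b ≥ a` we use that for `g` decreasing
`∫_{S^{d-1}} g(‖ω - u‖) du ≤ 2 d ∫_{ℝ^{d-1}} g(‖z‖) dz`: integrate over the unit ball along rays
instead of over the sphere, rotate `ω` to the first axis `e₁`, observe that `‖e₁ - x/‖x‖‖` dominates
the norm of the last `d - 1` coordinates of `x` in the ball, and enlarge the ball to the slab
`|x₁| < 1`. For `g(t) = (a² + b² t²)^(-d/2)` the scaling `z = (a/b) w` turns the right-hand side
into `J / (a b^(d-1))` with `J = ∫ (1 + ‖w‖²)^(-d/2) dw < ∞`.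
-/

open MeasureTheory Metric Set Module
open scoped ENNReal

theorem exists_orthonormalBasis_apply_zero_eq {E : Type*} [NormedAddCommGroup E]
    [InnerProductSpace ℝ E] [FiniteDimensional ℝ E] {n : ℕ} (hE : finrank ℝ E = n + 1) {u : E}
    (hu : ‖u‖ = 1) : ∃ b : OrthonormalBasis (Fin (n + 1)) ℝ E, b 0 = u := by
  have hortho : Orthonormal ℝ (({0} : Set (Fin (n + 1))).domRestrict fun _ ↦ u) :=
    ⟨fun _ ↦ hu, fun i j hij ↦ absurd (Subsingleton.elim i j) hij⟩
  obtain ⟨b, hb⟩ := hortho.exists_orthonormalBasis_extension_of_card_eq (by simpa using hE)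
  exact ⟨b, hb 0 rfl⟩

theorem exists_linearIsometryEquiv_apply_eq {E F : Type*} [NormedAddCommGroup E]
    [InnerProductSpace ℝ E] [FiniteDimensional ℝ E] [NormedAddCommGroup F] [InnerProductSpace ℝ F]
    [FiniteDimensional ℝ F] {n : ℕ} (hE : finrank ℝ E = n + 1) (hF : finrank ℝ F = n + 1)
    {u : E} {v : F} (hu : ‖u‖ = 1) (hv : ‖v‖ = 1) : ∃ e : E ≃ₗᵢ[ℝ] F, e u = v := by
  obtain ⟨b, rfl⟩ := exists_orthonormalBasis_apply_zero_eq hE hu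
  obtain ⟨c, rfl⟩ := exists_orthonormalBasis_apply_zero_eq hF hv
  exact ⟨b.repr.trans c.repr.symm, by simp⟩

theorem MeasureTheory.Measure.lintegral_toSphere_eq_mul_setLIntegral_ball {E : Type*}
    [NormedAddCommGroup E] [NormedSpace ℝ E] [FiniteDimensional ℝ E] [MeasurableSpace E]
    [BorelSpace E] [Nontrivial E] (μ : Measure E) [μ.IsAddHaarMeasure] {H : E → ℝ≥0∞}
    (hH : Measurable H) :
    ∫⁻ u, H u ∂μ.toSphere = finrank ℝ E * ∫⁻ x in ball 0 1, H (‖x‖⁻¹ • x) ∂μ := by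
  set one : Ioi (0 : ℝ) := ⟨1, mem_Ioi.2 one_pos⟩
  have hF : Measurable fun p : sphere (0 : E) 1 × Ioi (0 : ℝ) ↦
      H p.1 * (Iio one).indicator 1 p.2 :=
    (hH.comp (measurable_subtype_coe.comp measurable_fst)).mul
      ((measurable_one.indicator measurableSet_Iio).comp measurable_snd)
  have hball : ∫⁻ x in ball 0 1, H (‖x‖⁻¹ • x) ∂μ
      = (∫⁻ u, H u ∂μ.toSphere) * Measure.volumeIoiPow (finrank ℝ E - 1) (Iio one) :=
    calc ∫⁻ x in ball 0 1, H (‖x‖⁻¹ • x) ∂μ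
        = ∫⁻ x : ({0}ᶜ : Set E), (ball 0 1).indicator (fun x ↦ H (‖x‖⁻¹ • x)) x
            ∂μ.comap Subtype.val := by
          rw [lintegral_subtype_comap (measurableSet_singleton 0).compl, restrict_compl_singleton,
            lintegral_indicator measurableSet_ball]
      _ = ∫⁻ x : ({0}ᶜ : Set E), H ((homeomorphUnitSphereProd E x).1) *
            (Iio one).indicator 1 (homeomorphUnitSphereProd E x).2 ∂μ.comap Subtype.val := by
          refine lintegral_congr fun x ↦ ?_
          by_cases hx : ‖(x : E)‖ < 1 <;> simp [indicator, hx, one, ← Subtype.coe_lt_coe]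
      _ = ∫⁻ p, H p.1 * (Iio one).indicator 1 p.2
            ∂μ.toSphere.prod (Measure.volumeIoiPow (finrank ℝ E - 1)) :=
          μ.measurePreserving_homeomorphUnitSphereProd.lintegral_comp hF
      _ = (∫⁻ u, H u ∂μ.toSphere) * Measure.volumeIoiPow (finrank ℝ E - 1) (Iio one) := by
          rw [lintegral_prod_mul (f := fun u : sphere (0 : E) 1 ↦ H u)
            (hH.comp measurable_subtype_coe).aemeasurable
            (measurable_one.indicator measurableSet_Iio).aemeasurable,
            lintegral_indicator_one measurableSet_Iio]
  rw [hball, Measure.volumeIoiPow_apply_Iio, Nat.sub_add_cancel finrank_pos, mul_left_comm]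
  simp [one, ENNReal.ofReal_inv_of_pos, finrank_pos, finrank_pos.ne', ENNReal.mul_inv_cancel]

section RealProd

variable {V : Type*} [NormedAddCommGroup V] [InnerProductSpace ℝ V]

theorem WithLp.finrank_real_prod [FiniteDimensional ℝ V] :
    finrank ℝ (WithLp 2 (ℝ × V)) = finrank ℝ V + 1 := by
  rw [(WithLp.linearEquiv 2 ℝ (ℝ × V)).finrank_eq, finrank_prod, finrank_self, add_comm]

theorem WithLp.norm_snd_le_norm_sub_inv_norm_smul {y : WithLp 2 (ℝ × V)} (hy : ‖y‖ ≤ 1) :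
    ‖y.snd‖ ≤ ‖WithLp.toLp 2 ((1 : ℝ), (0 : V)) - ‖y‖⁻¹ • y‖ := by
  rcases eq_or_ne y 0 with rfl | hy0
  · simp
  calc ‖y.snd‖ ≤ ‖y‖⁻¹ * ‖y.snd‖ :=
        le_mul_of_one_le_left (norm_nonneg _) ((one_le_inv₀ (norm_pos_iff.2 hy0)).2 hy)
    _ = ‖(WithLp.toLp 2 ((1 : ℝ), (0 : V)) - ‖y‖⁻¹ • y).snd‖ := by
        simp [norm_smul]
    _ ≤ _ := WithLp.norm_snd_le ℝ _

variable [FiniteDimensional ℝ V] [MeasurableSpace V] [BorelSpace V]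

theorem WithLp.setLIntegral_ball_comp_snd_le {G : V → ℝ≥0∞} (hG : Measurable G) :
    ∫⁻ y in ball (0 : WithLp 2 (ℝ × V)) 1, G y.snd ≤ 2 * ∫⁻ z, G z := by
  have hball : ball (0 : WithLp 2 (ℝ × V)) 1 ⊆ WithLp.ofLp ⁻¹' (Ioo (-1) 1 ×ˢ univ) := by
    intro y hy
    have := (WithLp.norm_fst_le ℝ y).trans_lt (mem_ball_zero_iff.1 hy)
    exact ⟨abs_lt.1 this, trivial⟩
  calc ∫⁻ y in ball (0 : WithLp 2 (ℝ × V)) 1, G y.snd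
      ≤ ∫⁻ y in WithLp.ofLp ⁻¹' (Ioo (-1) 1 ×ˢ univ), G (WithLp.ofLp y).2 :=
        lintegral_mono_set hball
    _ = ∫⁻ p in Ioo (-1) 1 ×ˢ univ, G p.2 :=
        (WithLp.volume_preserving_ofLp ℝ V).setLIntegral_comp_preimage
          (measurableSet_Ioo.prod MeasurableSet.univ) (hG.comp measurable_snd)
    _ = 2 * ∫⁻ z, G z := by
        rw [Measure.volume_eq_prod, ← Measure.prod_restrict, Measure.restrict_univ,
          lintegral_prod (fun p : ℝ × V ↦ G p.2) (hG.comp measurable_snd).aemeasurable]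
        simp [lintegral_const, mul_comm, one_add_one_eq_two]

end RealProd

theorem rpow_neg_sq_add_sq_mul_norm_sq_eq {V : Type*} [NormedAddCommGroup V] [NormedSpace ℝ V]
    {a b : ℝ} (ha : 0 < a) (hb : 0 ≤ b) (k : ℕ) (z : V) :
    (a ^ 2 + b ^ 2 * ‖z‖ ^ 2) ^ (-(k : ℝ) / 2)
      = (a ^ k)⁻¹ * (1 + ‖(b / a) • z‖ ^ 2) ^ (-(k : ℝ) / 2) := by
  have : a ^ 2 + b ^ 2 * ‖z‖ ^ 2 = a ^ 2 * (1 + ‖(b / a) • z‖ ^ 2) := by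
    rw [norm_smul, Real.norm_of_nonneg (by positivity)]
    field_simp
  rw [this, Real.mul_rpow (by positivity) (by positivity), ← Real.rpow_natCast a 2,
    ← Real.rpow_mul ha.le, show (2 : ℕ) * (-(k : ℝ) / 2) = -(k : ℝ) by push_cast; ring,
    Real.rpow_neg ha.le, Real.rpow_natCast]

section Kernel

variable {V : Type*} [NormedAddCommGroup V] [InnerProductSpace ℝ V] [FiniteDimensional ℝ V]
  [MeasurableSpace V] [BorelSpace V]

theorem lintegral_rpow_neg_sq_add_sq_mul_norm_sq {a b : ℝ} (ha : 0 < a) (hb : 0 < b) :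
    ∫⁻ z : V, ENNReal.ofReal ((a ^ 2 + b ^ 2 * ‖z‖ ^ 2) ^ (-(finrank ℝ V + 1 : ℕ) / 2 : ℝ))
      = ENNReal.ofReal ((∫ w : V, (1 + ‖w‖ ^ 2) ^ (-(finrank ℝ V + 1 : ℕ) / 2 : ℝ))
          / (a * b ^ finrank ℝ V)) := by
  have hrepr := rpow_neg_sq_add_sq_mul_norm_sq_eq (V := V) ha hb.le (finrank ℝ V + 1)
  have hint : Integrable fun z : V ↦
      (a ^ 2 + b ^ 2 * ‖z‖ ^ 2) ^ (-(finrank ℝ V + 1 : ℕ) / 2 : ℝ) := by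
    simp_rw [hrepr]
    exact ((integrable_rpow_neg_one_add_norm_sq (by simp)).comp_smul
      (f := fun w : V ↦ (1 + ‖w‖ ^ 2) ^ (-(finrank ℝ V + 1 : ℕ) / 2 : ℝ))
      (div_pos hb ha).ne').const_mul _
  rw [← ofReal_integral_eq_lintegral_ofReal hint (ae_of_all _ fun z ↦ by positivity)]
  simp_rw [hrepr]
  rw [integral_const_mul, Measure.integral_comp_smul_of_nonneg volume
    (fun w : V ↦ (1 + ‖w‖ ^ 2) ^ (-(finrank ℝ V + 1 : ℕ) / 2 : ℝ)) (b / a) (hR := by positivity)]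
  congr 1
  simp only [smul_eq_mul, div_pow, inv_div]
  field_simp
  ring

variable {E : Type*} [NormedAddCommGroup E] [InnerProductSpace ℝ E] [FiniteDimensional ℝ E]
  [MeasurableSpace E] [BorelSpace E]

theorem lintegral_toSphere_comp_norm_sub_le (hEV : finrank ℝ E = finrank ℝ V + 1)
    {g : ℝ → ℝ≥0∞} (hg : Measurable g) (hg_anti : AntitoneOn g (Ici 0)) {ω : E} (hω : ‖ω‖ = 1) :
    ∫⁻ u, g ‖ω - u‖ ∂(volume : Measure E).toSphere ≤ 2 * finrank ℝ E * ∫⁻ z : V, g ‖z‖ := by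
  have : Nontrivial E := Module.nontrivial_of_finrank_eq_succ hEV
  obtain ⟨e, he⟩ := exists_linearIsometryEquiv_apply_eq hEV WithLp.finrank_real_prod hω
    (v := WithLp.toLp 2 ((1 : ℝ), (0 : V))) (by simp)
  calc ∫⁻ u, g ‖ω - u‖ ∂(volume : Measure E).toSphere
      = finrank ℝ E * ∫⁻ x in ball 0 1, g ‖ω - ‖x‖⁻¹ • x‖ :=
        Measure.lintegral_toSphere_eq_mul_setLIntegral_ball _ (H := fun x ↦ g ‖ω - x‖)
          (by fun_prop)
    _ = finrank ℝ E * ∫⁻ y in ball 0 1, g ‖e ω - ‖y‖⁻¹ • y‖ := by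
        rw [← e.measurePreserving.setLIntegral_comp_preimage measurableSet_ball (by fun_prop),
          ← map_zero e, e.isometry.preimage_ball]
        simp [← map_smul, ← map_sub]
    _ ≤ finrank ℝ E * ∫⁻ y in ball (0 : WithLp 2 (ℝ × V)) 1, g ‖y.snd‖ := by
        refine mul_le_mul_right (setLIntegral_mono
          (hg.comp (WithLp.continuous_snd 2 ℝ V).norm.measurable) fun y hy ↦ ?_) _
        rw [he]
        exact hg_anti (norm_nonneg _) (norm_nonneg _)
          (WithLp.norm_snd_le_norm_sub_inv_norm_smul (mem_ball_zero_iff.1 hy).le)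
    _ ≤ finrank ℝ E * (2 * ∫⁻ z : V, g ‖z‖) := by
        gcongr
        exact WithLp.setLIntegral_ball_comp_snd_le (by fun_prop)
    _ = 2 * finrank ℝ E * ∫⁻ z : V, g ‖z‖ := by ring

theorem integral_toSphere_rpow_neg_sq_add_sq_mul_norm_sub_sq_le
    (hEV : finrank ℝ E = finrank ℝ V + 1) {a b : ℝ} (ha : 0 < a) (hb : 0 < b) {ω : E}
    (hω : ‖ω‖ = 1) :
    ∫ u, (a ^ 2 + b ^ 2 * ‖ω - u‖ ^ 2) ^ (-(finrank ℝ V + 1 : ℕ) / 2 : ℝ)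
        ∂(volume : Measure E).toSphere
      ≤ 2 * finrank ℝ E * (∫ w : V, (1 + ‖w‖ ^ 2) ^ (-(finrank ℝ V + 1 : ℕ) / 2 : ℝ))
          / (a * b ^ finrank ℝ V) := by
  set g : ℝ → ℝ≥0∞ := fun t ↦
    ENNReal.ofReal ((a ^ 2 + b ^ 2 * t ^ 2) ^ (-(finrank ℝ V + 1 : ℕ) / 2 : ℝ))
  have hg_anti : AntitoneOn g (Ici 0) := by
    intro t₁ ht₁ t₂ _ ht
    refine ENNReal.ofReal_le_ofReal (Real.rpow_le_rpow_of_nonpos (by positivity) ?_ ?_)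
    · gcongr
    · have : (0 : ℝ) ≤ (finrank ℝ V + 1 : ℕ) := Nat.cast_nonneg _
      linarith
  rw [integral_eq_lintegral_of_nonneg_ae (ae_of_all _ fun u ↦ by positivity)
    (by fun_prop : Measurable _).aestronglyMeasurable]
  refine ENNReal.toReal_le_of_le_ofReal (by positivity) ?_
  calc ∫⁻ u, g ‖ω - u‖ ∂(volume : Measure E).toSphere
      ≤ 2 * finrank ℝ E * ∫⁻ z : V, g ‖z‖ :=
        lintegral_toSphere_comp_norm_sub_le hEV (by fun_prop) hg_anti hω
    _ = _ := by
        rw [lintegral_rpow_neg_sq_add_sq_mul_norm_sq ha hb, ← ENNReal.ofReal_natCast,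
          ← ENNReal.ofReal_ofNat 2, ← ENNReal.ofReal_mul (by norm_num),
          ← ENNReal.ofReal_mul (by positivity), mul_div_assoc]

end Kernel

theorem norm_smul_sub_smul_sq {E : Type*} [NormedAddCommGroup E] [InnerProductSpace ℝ E]
    (r s : ℝ) {ω ω' : E} (hω : ‖ω‖ = 1) (hω' : ‖ω'‖ = 1) :
    ‖r • ω - s • ω'‖ ^ 2 = (r - s) ^ 2 + r * s * ‖ω - ω'‖ ^ 2 := by
  rw [norm_sub_sq_real, norm_sub_sq_real, norm_smul, norm_smul, real_inner_smul_left,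
    real_inner_smul_right, hω, hω', Real.norm_eq_abs, Real.norm_eq_abs]
  ring_nf
  rw [sq_abs, sq_abs]
  ring

theorem norm_smul_sub_smul_rpow_neg {E : Type*} [NormedAddCommGroup E] [InnerProductSpace ℝ E]
    {r s : ℝ} (hr : 0 ≤ r) (hs : 0 ≤ s) {ω ω' : E} (hω : ‖ω‖ = 1) (hω' : ‖ω'‖ = 1) (k : ℝ) :
    ‖r • ω - s • ω'‖ ^ (-k) = (|r - s| ^ 2 + √(r * s) ^ 2 * ‖ω - ω'‖ ^ 2) ^ (-k / 2) := by
  rw [sq_abs, Real.sq_sqrt (mul_nonneg hr hs), ← norm_smul_sub_smul_sq r s hω hω',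
    ← Real.rpow_natCast, ← Real.rpow_mul (norm_nonneg _)]
  push_cast
  ring_nf

theorem integral_rpow_neg_sq_add_le {α : Type*} [MeasurableSpace α] (μ : Measure α)
    [IsFiniteMeasure μ] {a : ℝ} (ha : 0 < a) (k : ℕ) {f : α → ℝ} (hf : 0 ≤ f) :
    ∫ x, (a ^ 2 + f x) ^ (-(k : ℝ) / 2) ∂μ ≤ μ.real univ / a ^ k := by
  have hbound : ∀ x, (a ^ 2 + f x) ^ (-(k : ℝ) / 2) ≤ (a ^ k)⁻¹ := fun x ↦
    calc (a ^ 2 + f x) ^ (-(k : ℝ) / 2) ≤ (a ^ 2) ^ (-(k : ℝ) / 2) :=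
          Real.rpow_le_rpow_of_nonpos (by positivity) (le_add_of_nonneg_right (hf x))
            (by have := k.cast_nonneg (α := ℝ); linarith)
      _ = (a ^ k)⁻¹ := by
          rw [← Real.rpow_natCast a 2, ← Real.rpow_mul ha.le,
            show ((2 : ℕ) : ℝ) * (-(k : ℝ) / 2) = -(k : ℝ) by push_cast; ring,
            Real.rpow_neg ha.le, Real.rpow_natCast]
  calc ∫ x, (a ^ 2 + f x) ^ (-(k : ℝ) / 2) ∂μ ≤ ∫ _x, (a ^ k)⁻¹ ∂μ :=
        integral_mono_of_nonneg
          (ae_of_all _ fun x ↦ Real.rpow_nonneg (add_nonneg (sq_nonneg a) (hf x)) _)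
          (integrable_const _) (ae_of_all _ hbound)
    _ = μ.real univ / a ^ k := by rw [integral_const, smul_eq_mul, div_eq_mul_inv]

theorem inv_max_pow_le_rpow {a b : ℝ} (ha : 0 < a) (hb : 0 < b) (n : ℕ) :
    (max a b ^ n)⁻¹ ≤ 3 ^ (n / 2 : ℝ) * (a ^ 2 + 2 * b ^ 2) ^ (-(n : ℝ) / 2) := by
  have hM : 0 < max a b := lt_max_of_lt_left ha
  have hq : a ^ 2 + 2 * b ^ 2 ≤ 3 * max a b ^ 2 := by
    nlinarith [le_max_left a b, le_max_right a b]
  have h3M : (3 * max a b ^ 2) ^ (n / 2 : ℝ) = 3 ^ (n / 2 : ℝ) * max a b ^ n := by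
    rw [Real.mul_rpow (by norm_num) (by positivity), ← Real.rpow_natCast (max a b) 2,
      ← Real.rpow_mul hM.le, ← Real.rpow_natCast]
    congr 2
    push_cast; ring
  calc (max a b ^ n)⁻¹ = 3 ^ (n / 2 : ℝ) * ((3 * max a b ^ 2) ^ (n / 2 : ℝ))⁻¹ := by
        rw [h3M, mul_inv, mul_inv_cancel_left₀ (by positivity)]
    _ ≤ 3 ^ (n / 2 : ℝ) * ((a ^ 2 + 2 * b ^ 2) ^ (n / 2 : ℝ))⁻¹ := by
        gcongr
    _ = 3 ^ (n / 2 : ℝ) * (a ^ 2 + 2 * b ^ 2) ^ (-(n : ℝ) / 2) := by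
        rw [neg_div, Real.rpow_neg (by positivity)]

theorem le_div_mul_max_pow {I K W a b : ℝ} {n : ℕ} (ha : 0 < a) (hb : 0 < b) (hK : 0 ≤ K)
    (hW : 0 ≤ W) (hIK : I ≤ K / (a * b ^ n)) (hIW : I ≤ W / a ^ (n + 1)) :
    I ≤ (K + W) / (a * max a b ^ n) := by
  rcases max_cases a b with ⟨hmax, -⟩ | ⟨hmax, -⟩ <;> rw [hmax]
  · calc I ≤ W / a ^ (n + 1) := hIW
      _ ≤ (K + W) / (a * a ^ n) := by rw [← pow_succ']; gcongr; linarith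
  · calc I ≤ K / (a * b ^ n) := hIK
      _ ≤ (K + W) / (a * b ^ n) := by gcongr; linarith

theorem exists_integral_toSphere_norm_smul_sub_smul_rpow_neg_le {E : Type*}
    [NormedAddCommGroup E] [InnerProductSpace ℝ E] [FiniteDimensional ℝ E] [MeasurableSpace E]
    [BorelSpace E] [Nontrivial E] :
    ∃ C : ℝ, 0 < C ∧ ∀ r s : ℝ, 0 < r → 0 < s → r ≠ s → ∀ ω : sphere (0 : E) 1,
      ∫ u : sphere (0 : E) 1, ‖r • (ω : E) - s • (u : E)‖ ^ (-(finrank ℝ E : ℝ))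
          ∂(volume : Measure E).toSphere
        ≤ C * |r - s|⁻¹ * (r ^ 2 + s ^ 2) ^ (-((finrank ℝ E : ℝ) - 1) / 2) := by
  obtain ⟨n, hn⟩ : ∃ n, finrank ℝ E = n + 1 := ⟨_, (Nat.succ_pred_eq_of_pos finrank_pos).symm⟩
  have hEV : finrank ℝ E = finrank ℝ (EuclideanSpace ℝ (Fin n)) + 1 := by simp [hn]
  set K := 2 * (finrank ℝ E : ℝ) *
    ∫ w : EuclideanSpace ℝ (Fin n), (1 + ‖w‖ ^ 2) ^ (-(n + 1 : ℕ) / 2 : ℝ)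
  set W := (volume : Measure E).toSphere.real univ
  have hK : 0 ≤ K := by positivity
  have hW : 0 < W := by
    have : NeZero (volume : Measure E).toSphere := ⟨Measure.toSphere_ne_zero _⟩
    exact measureReal_univ_pos
  refine ⟨3 ^ (n / 2 : ℝ) * (K + W), by positivity, fun r s hr hs hrs ω ↦ ?_⟩
  set a := |r - s|
  set b := √(r * s)
  have ha : 0 < a := abs_pos.2 (sub_ne_zero.2 hrs)
  have hb : 0 < b := Real.sqrt_pos.2 (mul_pos hr hs)
  have hq : r ^ 2 + s ^ 2 = a ^ 2 + 2 * b ^ 2 := by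
    rw [sq_abs, Real.sq_sqrt (mul_pos hr hs).le]
    ring
  have hintegrand := fun u : sphere (0 : E) 1 ↦ norm_smul_sub_smul_rpow_neg hr.le hs.le
    (norm_eq_of_mem_sphere ω) (norm_eq_of_mem_sphere u) (finrank ℝ E)
  have hIK := integral_toSphere_rpow_neg_sq_add_sq_mul_norm_sub_sq_le hEV ha hb
    (norm_eq_of_mem_sphere ω)
  have hIW := integral_rpow_neg_sq_add_le (volume : Measure E).toSphere ha (n + 1)
    (f := fun u ↦ b ^ 2 * ‖(ω : E) - u‖ ^ 2) fun u ↦ by positivity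
  simp only [finrank_euclideanSpace_fin] at hIK
  simp_rw [hintegrand, hn, hq]
  calc _ ≤ (K + W) / (a * max a b ^ n) := le_div_mul_max_pow ha hb hK hW.le hIK hIW
    _ = (K + W) * a⁻¹ * (max a b ^ n)⁻¹ := by rw [div_eq_mul_inv, mul_inv, mul_assoc]
    _ ≤ (K + W) * a⁻¹ * (3 ^ (n / 2 : ℝ) * (a ^ 2 + 2 * b ^ 2) ^ (-(n : ℝ) / 2)) := by
        gcongr
        exact inv_max_pow_le_rpow ha hb n
    _ = _ := by
        push_cast
        ring_nf

/-- For `d ≥ 2` and `r ≠ s` positive,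
`sup_{ω ∈ S^{d-1}} ∫_{S^{d-1}} |rω - sω'|^{-d} dω' ≤ C |r-s|⁻¹ (r²+s²)^{-(d-1)/2}`,
where the integral is with respect to the surface measure on the unit sphere. -/
theorem statement2 (d : ℕ) (hd : 2 ≤ d) :
    ∃ C : ℝ, 0 < C ∧ ∀ r s : ℝ, 0 < r → 0 < s → r ≠ s →
      ∀ ω : sphere (0 : EuclideanSpace ℝ (Fin d)) 1,
        ∫ ω' : sphere (0 : EuclideanSpace ℝ (Fin d)) 1,
            ‖r • (ω : EuclideanSpace ℝ (Fin d)) - s • (ω' : EuclideanSpace ℝ (Fin d))‖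
              ^ (-(d : ℝ)) ∂((volume : Measure (EuclideanSpace ℝ (Fin d))).toSphere)
          ≤ C * |r - s|⁻¹ * (r ^ 2 + s ^ 2) ^ (-((d : ℝ) - 1) / 2) := by
  have : Nonempty (Fin d) := ⟨⟨0, by omega⟩⟩
  simpa using exists_integral_toSphere_norm_smul_sub_smul_rpow_neg_le
    (E := EuclideanSpace ℝ (Fin d))
end

section
/- For d ≥ 2 and r, s > 0 with r ≠ s, ∫₀^π (r² + s² - 2rs cos θ)^{-d/2} (sin θ)^{d-2} dθ ≤ C |r-s|^{-1} (r² + s²)^{-(d-1)/2} for a constant C depending only on d. -/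
/-!
With `ε = |r - s|` and `a = √(r² + s²) / π`, the base `r² + s² - 2rs cos θ` dominates both `ε²`
and `(r² + s²)(1 - cos θ) / 2 ≥ a²θ²` on `(0, π)`, while `sin θ ≤ θ`; so the integrand is at most
`2^(d/2) (ε² + a²θ²)^(-d/2) θ^(d-2)`. The integral of the latter over `(0, ∞)` is homogeneous:
substituting `t = aθ/ε` turns it into `ε⁻¹ a^(1-d) ∫₀^∞ (1 + t²)^(-d/2) t^(d-2) dt`, and this last
integral is at most `2`, its integrand being at most `1` on `(0, 1]` and at most `t⁻²` beyond.
-/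

open MeasureTheory Set Real

noncomputable def radialKernel (d : ℕ) (ε a θ : ℝ) : ℝ :=
  (ε ^ 2 + a ^ 2 * θ ^ 2) ^ (-(d : ℝ) / 2) * θ ^ (d - 2)

lemma sq_rpow_neg_natCast_div_two {x : ℝ} (hx : 0 ≤ x) (n : ℕ) :
    (x ^ 2) ^ (-(n : ℝ) / 2) = (x ^ n)⁻¹ := by
  rw [← rpow_natCast x 2, ← rpow_mul hx,
    show ((2 : ℕ) : ℝ) * (-(n : ℝ) / 2) = -n by push_cast; ring, rpow_neg hx, rpow_natCast]

namespace radialKernel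

variable {d : ℕ} {ε a θ : ℝ}

lemma nonneg (hθ : 0 ≤ θ) : 0 ≤ radialKernel d ε a θ := by
  unfold radialKernel; positivity

lemma continuous (hε : ε ≠ 0) : Continuous (radialKernel d ε a) :=
  ((continuous_const.add (continuous_const.mul (continuous_pow 2))).rpow_const
    fun x => .inl (by positivity : ε ^ 2 + a ^ 2 * x ^ 2 ≠ 0)).mul (continuous_pow _)

lemma one_one_le_one (hθ₀ : 0 ≤ θ) (hθ₁ : θ ≤ 1) : radialKernel d 1 1 θ ≤ 1 := by
  unfold radialKernel
  refine mul_le_one₀ (rpow_le_one_of_one_le_of_nonpos (by nlinarith) ?_) (by positivity)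
    (pow_le_one₀ hθ₀ hθ₁)
  have : (0 : ℝ) ≤ d := d.cast_nonneg
  linarith

lemma one_one_le_rpow (hd : 2 ≤ d) (hθ : 1 ≤ θ) : radialKernel d 1 1 θ ≤ θ ^ (-2 : ℝ) := by
  have hθ₀ : 0 < θ := one_pos.trans_le hθ
  calc radialKernel d 1 1 θ ≤ (θ ^ 2) ^ (-(d : ℝ) / 2) * θ ^ (d - 2) := by
        unfold radialKernel
        gcongr ?_ * _
        refine rpow_le_rpow_of_nonpos (by positivity) (by linarith) ?_
        have : (0 : ℝ) ≤ d := d.cast_nonneg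
        linarith
    _ = θ ^ (-2 : ℝ) := by
        rw [sq_rpow_neg_natCast_div_two hθ₀.le, rpow_neg hθ₀.le, rpow_two]
        obtain ⟨n, rfl⟩ := Nat.exists_eq_add_of_le' hd
        rw [Nat.add_sub_cancel]
        field_simp
        ring

lemma integrableOn_one_one (hd : 2 ≤ d) : IntegrableOn (radialKernel d 1 1) (Ioi 0) := by
  have hcont := continuous (d := d) (a := 1) one_ne_zero
  have htail : IntegrableOn (radialKernel d 1 1) (Ioi 1) := by
    refine (integrableOn_Ioi_rpow_of_lt (by norm_num : (-2 : ℝ) < -1) one_pos).mono'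
      hcont.aestronglyMeasurable.restrict ?_
    filter_upwards [ae_restrict_mem measurableSet_Ioi] with θ hθ
    rw [norm_of_nonneg (nonneg (zero_le_one.trans hθ.out.le))]
    exact one_one_le_rpow hd hθ.out.le
  rw [← Ioc_union_Ioi_eq_Ioi zero_le_one]
  exact hcont.integrableOn_Ioc.union htail

lemma setIntegral_one_one_le_two (hd : 2 ≤ d) : ∫ θ in Ioi 0, radialKernel d 1 1 θ ≤ 2 := by
  have hint := integrableOn_one_one hd
  have hhead : ∫ θ in Ioc 0 1, radialKernel d 1 1 θ ≤ 1 := by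
    simpa using setIntegral_mono_on (hint.mono_set Ioc_subset_Ioi_self)
      (integrableOn_const (by simp)) measurableSet_Ioc fun θ hθ => one_one_le_one hθ.1.le hθ.2
  have htail : ∫ θ in Ioi 1, radialKernel d 1 1 θ ≤ 1 := by
    calc ∫ θ in Ioi 1, radialKernel d 1 1 θ ≤ ∫ θ in Ioi 1, θ ^ (-2 : ℝ) :=
          setIntegral_mono_on (hint.mono_set (Ioi_subset_Ioi zero_le_one))
            (integrableOn_Ioi_rpow_of_lt (by norm_num) one_pos) measurableSet_Ioi
            fun θ hθ => one_one_le_rpow hd hθ.out.le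
      _ = 1 := by rw [integral_Ioi_rpow_of_lt (by norm_num) one_pos]; norm_num
  rw [← Ioc_union_Ioi_eq_Ioi zero_le_one, setIntegral_union (Ioc_disjoint_Ioi le_rfl)
    measurableSet_Ioi (hint.mono_set Ioc_subset_Ioi_self)
    (hint.mono_set (Ioi_subset_Ioi zero_le_one))]
  linarith

lemma eq_mul_one_one (hd : 2 ≤ d) (hε : 0 < ε) (ha : 0 < a) (θ : ℝ) :
    radialKernel d ε a θ = (ε ^ 2 * a ^ (d - 2))⁻¹ * radialKernel d 1 1 (a / ε * θ) := by
  have hbase : 1 ^ 2 + 1 ^ 2 * (a / ε * θ) ^ 2 = (ε ^ 2 + a ^ 2 * θ ^ 2) / ε ^ 2 := by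
    field_simp
  unfold radialKernel
  rw [hbase, div_rpow (by positivity) (by positivity), sq_rpow_neg_natCast_div_two hε.le]
  obtain ⟨n, rfl⟩ := Nat.exists_eq_add_of_le' hd
  rw [Nat.add_sub_cancel, mul_pow, div_pow]
  field_simp
  ring

lemma integrableOn (hd : 2 ≤ d) (hε : 0 < ε) (ha : 0 < a) :
    IntegrableOn (radialKernel d ε a) (Ioi 0) := by
  simp_rw [IntegrableOn, funext (eq_mul_one_one hd hε ha)]
  refine Integrable.const_mul ?_ _
  rw [← IntegrableOn, integrableOn_Ioi_comp_mul_left_iff _ _ (by positivity), mul_zero]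
  exact integrableOn_one_one hd

lemma setIntegral_eq (hd : 2 ≤ d) (hε : 0 < ε) (ha : 0 < a) :
    ∫ θ in Ioi 0, radialKernel d ε a θ =
      (ε * a ^ (d - 1))⁻¹ * ∫ θ in Ioi 0, radialKernel d 1 1 θ := by
  simp_rw [eq_mul_one_one hd hε ha]
  rw [integral_const_mul, integral_comp_mul_left_Ioi _ _ (by positivity), mul_zero, smul_eq_mul,
    ← mul_assoc]
  congr 1
  obtain ⟨n, rfl⟩ := Nat.exists_eq_add_of_le' hd
  rw [Nat.add_sub_cancel, show n + 2 - 1 = n + 1 by omega]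
  field_simp
  ring

end radialKernel

lemma sq_abs_sub_add_mul_sq_le {r s θ : ℝ} (hr : 0 ≤ r) (hs : 0 ≤ s) (hθ : |θ| ≤ π) :
    |r - s| ^ 2 + (√(r ^ 2 + s ^ 2) / π) ^ 2 * θ ^ 2 ≤ 2 * (r ^ 2 + s ^ 2 - 2 * r * s * cos θ) := by
  have hcos := cos_le_one_sub_mul_cos_sq hθ
  have hquad : (r ^ 2 + s ^ 2) / π ^ 2 * θ ^ 2 ≤ (r ^ 2 + s ^ 2) / 2 * (1 - cos θ) :=
    calc (r ^ 2 + s ^ 2) / π ^ 2 * θ ^ 2 = (r ^ 2 + s ^ 2) / 2 * (2 / π ^ 2 * θ ^ 2) := by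
          field_simp
      _ ≤ (r ^ 2 + s ^ 2) / 2 * (1 - cos θ) := by gcongr; linarith
  rw [sq_abs, div_pow, sq_sqrt (by positivity)]
  -- `2 (r² + s² - 2rs cos θ) - (r - s)² - (r² + s²)(1 - cos θ)/2`
  -- `= (r - s)²(1 + cos θ)/2 + 3rs(1 - cos θ)`
  nlinarith [mul_nonneg (sq_nonneg (r - s)) (neg_le_iff_add_nonneg.1 (neg_one_le_cos θ)),
    mul_nonneg (mul_nonneg hr hs) (sub_nonneg.2 (cos_le_one θ))]

lemma rpow_mul_sin_pow_le_radialKernel (d : ℕ) {r s θ : ℝ} (hr : 0 < r) (hs : 0 < s)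
    (hθ : θ ∈ Ioo 0 π) :
    (r ^ 2 + s ^ 2 - 2 * r * s * cos θ) ^ (-(d : ℝ) / 2) * sin θ ^ (d - 2) ≤
      2 ^ ((d : ℝ) / 2) * radialKernel d |r - s| (√(r ^ 2 + s ^ 2) / π) θ := by
  set X := |r - s| ^ 2 + (√(r ^ 2 + s ^ 2) / π) ^ 2 * θ ^ 2
  have hX : 0 < X := by
    have : 0 < √(r ^ 2 + s ^ 2) / π := by positivity
    have := hθ.1
    positivity
  have hbase : X / 2 ≤ r ^ 2 + s ^ 2 - 2 * r * s * cos θ := by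
    have := sq_abs_sub_add_mul_sq_le hr.le hs.le (abs_le.2 ⟨by linarith [hθ.1, pi_pos], hθ.2.le⟩)
    linarith
  have hexp : -(d : ℝ) / 2 ≤ 0 := by have : (0 : ℝ) ≤ d := d.cast_nonneg; linarith
  calc (r ^ 2 + s ^ 2 - 2 * r * s * cos θ) ^ (-(d : ℝ) / 2) * sin θ ^ (d - 2)
      ≤ (X / 2) ^ (-(d : ℝ) / 2) * θ ^ (d - 2) := by
        have hsin := sin_nonneg_of_nonneg_of_le_pi hθ.1.le hθ.2.le
        exact mul_le_mul (rpow_le_rpow_of_nonpos (by positivity) hbase hexp)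
          (pow_le_pow_left₀ hsin (sin_le hθ.1.le) _) (by positivity) (by positivity)
    _ = 2 ^ ((d : ℝ) / 2) * radialKernel d |r - s| (√(r ^ 2 + s ^ 2) / π) θ := by
        rw [radialKernel, div_rpow hX.le zero_le_two, neg_div, rpow_neg zero_le_two,
          div_inv_eq_mul]
        ring

lemma setIntegral_Ioo_le_setIntegral_radialKernel {d : ℕ} (hd : 2 ≤ d) {r s : ℝ} (hr : 0 < r)
    (hs : 0 < s) (hrs : r ≠ s) :
    ∫ θ in Ioo 0 π, (r ^ 2 + s ^ 2 - 2 * r * s * cos θ) ^ (-(d : ℝ) / 2) * sin θ ^ (d - 2) ≤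
      2 ^ ((d : ℝ) / 2) * ∫ θ in Ioi 0, radialKernel d |r - s| (√(r ^ 2 + s ^ 2) / π) θ := by
  have hK := radialKernel.integrableOn hd (abs_pos.2 (sub_ne_zero.2 hrs))
    (by positivity : 0 < √(r ^ 2 + s ^ 2) / π)
  rw [← integral_const_mul]
  calc _ ≤ ∫ θ in Ioo 0 π,
          2 ^ ((d : ℝ) / 2) * radialKernel d |r - s| (√(r ^ 2 + s ^ 2) / π) θ := by
        refine integral_mono_of_nonneg ?_ ((hK.mono_set Ioo_subset_Ioi_self).const_mul _) ?_
        · filter_upwards [ae_restrict_mem measurableSet_Ioo] with θ hθ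
          have := sin_nonneg_of_nonneg_of_le_pi hθ.1.le hθ.2.le
          have := mul_le_mul_of_nonneg_left (cos_le_one θ) (mul_pos hr hs).le
          exact mul_nonneg (rpow_nonneg (by nlinarith [sq_nonneg (r - s)]) _) (by positivity)
        · filter_upwards [ae_restrict_mem measurableSet_Ioo] with θ hθ
          exact rpow_mul_sin_pow_le_radialKernel d hr hs hθ
    _ ≤ _ := by
        refine setIntegral_mono_set (hK.const_mul _) ?_ Ioo_subset_Ioi_self.eventuallyLE
        filter_upwards [ae_restrict_mem measurableSet_Ioi] with θ hθ
        exact mul_nonneg (by positivity) (radialKernel.nonneg hθ.out.le)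

/-- For `d ≥ 2` and `r, s > 0` with `r ≠ s`,
`∫₀^π (r² + s² - 2rs cos θ)^(-d/2) (sin θ)^(d-2) dθ ≤ C |r-s|⁻¹ (r²+s²)^(-(d-1)/2)`
with `C` depending only on `d`. -/
theorem statement3 (d : ℕ) (hd : 2 ≤ d) :
    ∃ C : ℝ, 0 < C ∧ ∀ r s : ℝ, 0 < r → 0 < s → r ≠ s →
      ∫ θ in Ioo (0:ℝ) π,
          (r ^ 2 + s ^ 2 - 2 * r * s * Real.cos θ) ^ (-(d : ℝ) / 2) * Real.sin θ ^ (d - 2 : ℕ)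
        ≤ C * |r - s|⁻¹ * (r ^ 2 + s ^ 2) ^ (-((d : ℝ) - 1) / 2) := by
  refine ⟨2 ^ ((d : ℝ) / 2) * 2 * π ^ (d - 1), by positivity, fun r s hr hs hrs => ?_⟩
  have hε : 0 < |r - s| := abs_pos.2 (sub_ne_zero.2 hrs)
  have ha : 0 < √(r ^ 2 + s ^ 2) / π := by positivity
  calc _ ≤ 2 ^ ((d : ℝ) / 2) * ∫ θ in Ioi 0, radialKernel d |r - s| (√(r ^ 2 + s ^ 2) / π) θ :=
        setIntegral_Ioo_le_setIntegral_radialKernel hd hr hs hrs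
    _ ≤ 2 ^ ((d : ℝ) / 2) * ((|r - s| * (√(r ^ 2 + s ^ 2) / π) ^ (d - 1))⁻¹ * 2) := by
        rw [radialKernel.setIntegral_eq hd hε ha]
        gcongr
        exact radialKernel.setIntegral_one_one_le_two hd
    _ = 2 ^ ((d : ℝ) / 2) * 2 * π ^ (d - 1) * |r - s|⁻¹ *
          (r ^ 2 + s ^ 2) ^ (-((d : ℝ) - 1) / 2) := by
        rw [← sq_sqrt (by positivity : 0 ≤ r ^ 2 + s ^ 2), sqrt_sq (sqrt_nonneg _),
          show -((d : ℝ) - 1) / 2 = -((d - 1 : ℕ) : ℝ) / 2 by rw [Nat.cast_sub (by omega)]; simp,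
          sq_rpow_neg_natCast_div_two (sqrt_nonneg _), div_pow]
        field_simp
end
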